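/- arXiv:2507.13199 — 8 statements merged into one kernel-verified Lean document; each statement's English description precedes it below -/
import Mathlib

section
/- Let Γ be a group and let H and G be subgroups of Γ. Then there exists a subgroup K of Γ such that G ≤ K, K is H-equivalent to G (i.e. H·K = H·G as subsets of Γ), and every subgroup K′ of Γ with G ≤ K′ that is H-equivalent to G satisfies K′ ≤ K. In other words, among the overgroups of G that are H-equivalent to G there is a greatest one (the H-closure of G), and it is the largest overgroup of G contained in the set H·G. -/
open Pointwise

/-- For subgroups `H, G` of a group `Γ`, among the overgroups of `G` that
are `H`-equivalent to `G` (i.e. `H·K = H·G` as subsets of `Γ`) there is a greatest one,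
the `H`-closure of `G`; it is moreover the largest overgroup of `G` contained in `H·G`. -/
theorem exists_H_closure {Γ : Type*} [Group Γ] (H G : Subgroup Γ) :
    ∃ K : Subgroup Γ, G ≤ K ∧
      (H : Set Γ) * (K : Set Γ) = (H : Set Γ) * (G : Set Γ) ∧
      (∀ K' : Subgroup Γ, G ≤ K' →
        (H : Set Γ) * (K' : Set Γ) = (H : Set Γ) * (G : Set Γ) → K' ≤ K) ∧
      (K : Set Γ) ⊆ (H : Set Γ) * (G : Set Γ) ∧
      (∀ K' : Subgroup Γ, G ≤ K' →
        (K' : Set Γ) ⊆ (H : Set Γ) * (G : Set Γ) → K' ≤ K) := by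
  set S : Set Γ := (H : Set Γ) * (G : Set Γ) with hS
  have hone : (1 : Γ) ∈ S := ⟨1, H.one_mem, 1, G.one_mem, by simp⟩
  -- Auxiliary: K := {x | S * {x} = S}, the right-stabilizer of S.
  have key : ∀ x : Γ, S * {x} = S ↔ (∀ s ∈ S, s * x ∈ S) ∧ (∀ s ∈ S, s * x⁻¹ ∈ S) := by
    intro x
    constructor
    · intro h
      constructor
      · intro s hs
        have : s * x ∈ S * {x} := Set.mul_mem_mul hs rfl
        rwa [h] at this
      · intro s hs
        have hs' : s ∈ S * {x} := by rw [h]; exact hs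
        obtain ⟨t, ht, x', hx', heq⟩ := hs'
        have hx'' : x' = x := hx'
        rw [hx''] at heq
        have : t = s * x⁻¹ := eq_mul_inv_of_mul_eq heq
        rwa [this] at ht
    · rintro ⟨h1, h2⟩
      apply Set.Subset.antisymm
      · rintro _ ⟨s, hs, y, rfl, rfl⟩
        exact h1 s hs
      · intro s hs
        have : s * x⁻¹ * x ∈ S * {x} := Set.mul_mem_mul (h2 s hs) rfl
        simpa using this
  let K : Subgroup Γ :=
    { carrier := {x | S * {x} = S}
      one_mem' := by simp
      mul_mem' := by
        intro a b (ha : S * {a} = S) (hb : S * {b} = S)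
        show S * {a * b} = S
        have : ({a} : Set Γ) * {b} = {a * b} := by simp
        rw [← this, ← mul_assoc, ha, hb]
      inv_mem' := by
        intro a (ha : S * {a} = S)
        show S * {a⁻¹} = S
        calc S * {a⁻¹} = S * {a} * {a⁻¹} := by rw [ha]
        _ = S * ({a} * {a⁻¹}) := by rw [mul_assoc]
        _ = S := by simp }
  have hmemK : ∀ x : Γ, x ∈ K ↔ S * {x} = S := fun _ => Iff.rfl
  -- G ≤ K
  have hGK : G ≤ K := by
    intro g hg
    rw [hmemK, key]
    constructor
    · rintro _ ⟨h, hh, g', hg', rfl⟩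
      rw [mul_assoc]
      exact Set.mul_mem_mul hh (G.mul_mem hg' hg)
    · rintro _ ⟨h, hh, g', hg', rfl⟩
      rw [mul_assoc]
      exact Set.mul_mem_mul hh (G.mul_mem hg' (G.inv_mem hg))
  -- K ⊆ S
  have hKS : (K : Set Γ) ⊆ S := by
    intro x hx
    have hx' : S * {x} = S := hx
    rw [← hx']
    have : (1 : Γ) * x ∈ S * {x} := Set.mul_mem_mul hone rfl
    simpa using this
  -- H * S ⊆ S
  have hHS : ∀ h ∈ H, ∀ s ∈ S, h * s ∈ S := by
    rintro h hh _ ⟨h', hh', g, hg, rfl⟩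
    rw [← mul_assoc]
    exact Set.mul_mem_mul (H.mul_mem hh hh') hg
  -- any subgroup K' with G ≤ K' ⊆ S satisfies K' ≤ K
  have hmax : ∀ K' : Subgroup Γ, G ≤ K' → (K' : Set Γ) ⊆ S → K' ≤ K := by
    intro K' hGK' hK'S k hk
    have main : ∀ k' ∈ K', ∀ s ∈ S, s * k' ∈ S := by
      rintro k' hk' _ ⟨h, hh, g, hg, rfl⟩
      have : g * k' ∈ K' := K'.mul_mem (hGK' hg) hk'
      have hgk : g * k' ∈ S := hK'S this
      rw [mul_assoc]
      exact hHS h hh _ hgk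
    rw [hmemK, key]
    exact ⟨main k hk, main k⁻¹ (K'.inv_mem hk)⟩
  -- H * K = H * G
  have hHK : (H : Set Γ) * (K : Set Γ) = S := by
    apply Set.Subset.antisymm
    · rintro _ ⟨h, hh, k, hk, rfl⟩
      exact hHS h hh k (hKS hk)
    · rintro _ ⟨h, hh, g, hg, rfl⟩
      exact Set.mul_mem_mul hh (hGK hg)
  refine ⟨K, hGK, hHK, ?_, hKS, hmax⟩
  intro K' hGK' hHK'
  apply hmax K' hGK'
  intro k hk
  have : (1 : Γ) * k ∈ (H : Set Γ) * (K' : Set Γ) := Set.mul_mem_mul H.one_mem hk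
  rw [hHK'] at this
  simpa using this
end

section
/- Let Γ be a group and let H and G be subgroups of Γ. Then there exists a subgroup K of Γ such that G ≤ K, K is 𝓗-equivalent to G (i.e. H·g·K = H·g·G as subsets of Γ for every g ∈ Γ), and every subgroup K′ of Γ with G ≤ K′ that is 𝓗-equivalent to G satisfies K′ ≤ K. In other words, among the overgroups of G that are 𝓗-equivalent to G there is a greatest one (the 𝓗-closure of G). -/
open Pointwise

/-- Two subgroups `G`, `G'` of `Γ` are `𝓗`-equivalent (for a subgroup `H` of `Γ`, with `𝓗`
its conjugacy class) if `H·g·G = H·g·G'` as subsets of `Γ` for every `g ∈ Γ`. -/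
def HConjEquiv {Γ : Type*} [Group Γ] (H G G' : Subgroup Γ) : Prop :=
  ∀ g : Γ, (H : Set Γ) * {g} * (G : Set Γ) = (H : Set Γ) * {g} * (G' : Set Γ)

lemma key_stab {Γ : Type*} [Group Γ] (H G K' : Subgroup Γ)
    (he : HConjEquiv H K' G) {x : Γ} (hx : x ∈ K') (g : Γ) :
    (H : Set Γ) * {g} * (G : Set Γ) * {x} = (H : Set Γ) * {g} * (G : Set Γ) := by
  rw [← he g, mul_assoc, Subgroup.subgroup_mul_singleton hx]

/-- The `𝓗`-closure: all elements stabilizing each double coset `H·g·G` on the right. -/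
def Hclosure {Γ : Type*} [Group Γ] (H G : Subgroup Γ) : Subgroup Γ where
  carrier := {x | ∀ g : Γ, (H : Set Γ) * {g} * (G : Set Γ) * {x} =
    (H : Set Γ) * {g} * (G : Set Γ)}
  one_mem' := by intro g; simp
  mul_mem' := by
    intro a b ha hb g
    rw [← Set.singleton_mul_singleton, ← mul_assoc, ha g, hb g]
  inv_mem' := by
    intro a ha g
    calc (H : Set Γ) * {g} * (G : Set Γ) * {a⁻¹}
        = (H : Set Γ) * {g} * (G : Set Γ) * {a} * {a⁻¹} := by rw [ha g]
      _ = (H : Set Γ) * {g} * (G : Set Γ) := by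
          rw [mul_assoc, Set.singleton_mul_singleton, mul_inv_cancel]
          simp

/-- For subgroups `H, G` of a group `Γ`, among the overgroups of `G` that
are `𝓗`-equivalent to `G` there is a greatest one, the `𝓗`-closure of `G`. -/
theorem exists_Hconj_closure {Γ : Type*} [Group Γ] (H G : Subgroup Γ) :
    ∃ K : Subgroup Γ, G ≤ K ∧ HConjEquiv H K G ∧
      ∀ K' : Subgroup Γ, G ≤ K' → HConjEquiv H K' G → K' ≤ K := by
  have hGle : G ≤ Hclosure H G := fun x hx g => key_stab H G G (fun _ => rfl) hx g
  refine ⟨Hclosure H G, hGle, ?_, ?_⟩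
  · intro g
    apply Set.Subset.antisymm
    · rintro y ⟨w, hw, k, hk, rfl⟩
      have hwG : w ∈ (H : Set Γ) * {g} * (G : Set Γ) :=
        ⟨w, hw, 1, G.one_mem, mul_one w⟩
      rw [← hk g]
      exact ⟨w, hwG, k, rfl, rfl⟩
    · exact Set.mul_subset_mul_left hGle
  · intro K' hGK' he x hx g
    exact key_stab H G K' he hx g
end

section
/- Let Γ be a group, let H, G, K be subgroups of Γ with G ≤ K. Then K is 𝓗-equivalent to G (i.e. H·g·K = H·g·G for every g ∈ Γ) if and only if the underlying set of K is contained in (g⁻¹·H·g)·G for every g ∈ Γ, i.e. K ⊆ ⋂_{g ∈ Γ} (g⁻¹ H g)·G. -/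
open Pointwise

/-- For subgroups `G ≤ K` of `Γ` and a subgroup `H` of `Γ`, `K` is
`𝓗`-equivalent to `G` if and only if `K ⊆ (g⁻¹ H g)·G` for every `g ∈ Γ`. -/
theorem hConjEquiv_iff_subset_inter {Γ : Type*} [Group Γ] (H G K : Subgroup Γ)
    (hGK : G ≤ K) :
    HConjEquiv H K G ↔
      ∀ g : Γ, (K : Set Γ) ⊆ {g⁻¹} * (H : Set Γ) * {g} * (G : Set Γ) := by
  constructor
  · intro h g k hk
    have hg : g * k ∈ (H : Set Γ) * {g} * (K : Set Γ) := by
      have : (1 : Γ) * g * k = g * k := by group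
      exact this ▸ Set.mul_mem_mul (Set.mul_mem_mul H.one_mem rfl) hk
    rw [h g] at hg
    obtain ⟨hg', ⟨h1, hh1, g', hgg, rfl⟩, x, hx, hgk⟩ := hg
    rw [Set.mem_singleton_iff] at hgg; subst hgg
    refine ⟨g'⁻¹ * h1 * g', ⟨g'⁻¹ * h1, ⟨g'⁻¹, rfl, h1, hh1, rfl⟩, g', rfl, rfl⟩, x, hx, ?_⟩
    simp only at hgk
    have : k = g'⁻¹ * (h1 * g' * x) := by rw [hgk]; group
    rw [this]; group
  · intro h g
    apply Set.Subset.antisymm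
    · rintro _ ⟨hg', ⟨h1, hh1, g', hgg, rfl⟩, k, hk, rfl⟩
      rw [Set.mem_singleton_iff] at hgg; subst hgg
      obtain ⟨y, ⟨z, ⟨gi, hgi, h2, hh2, rfl⟩, g2, hgg2, rfl⟩, x, hx, hkx⟩ := h g' hk
      rw [Set.mem_singleton_iff] at hgi hgg2; subst hgi; subst hgg2
      refine ⟨h1 * h2 * g2, ⟨h1 * h2, H.mul_mem hh1 hh2, g2, rfl, rfl⟩, x, hx, ?_⟩
      simp only at hkx
      have : k = g2⁻¹ * h2 * g2 * x := hkx.symm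
      rw [this]; group
    · exact Set.mul_subset_mul_left fun x hx => hGK hx
end

section
/- Let Γ be a group, let H be a subgroup of Γ, and let a ∈ Γ. Two subgroups G, G′ of Γ are 𝓗-equivalent if and only if their conjugates a·G·a⁻¹ and a·G′·a⁻¹ are 𝓗-equivalent. Consequently, if K is the 𝓗-closure of G (the greatest overgroup of G that is 𝓗-equivalent to G), then a·K·a⁻¹ is the 𝓗-closure of a·G·a⁻¹. -/
open Pointwise

/-- `K` is the `𝓗`-closure of `G`: the greatest overgroup of `G` that is `𝓗`-equivalent
to `G`. -/
def IsHConjClosure {Γ : Type*} [Group Γ] (H G K : Subgroup Γ) : Prop :=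
  G ≤ K ∧ HConjEquiv H K G ∧ ∀ K' : Subgroup Γ, G ≤ K' → HConjEquiv H K' G → K' ≤ K

lemma coe_conjmap {Γ : Type*} [Group Γ] (a : Γ) (G : Subgroup Γ) :
    ((G.map (MulAut.conj a).toMonoidHom : Subgroup Γ) : Set Γ)
      = {a} * (G : Set Γ) * {a⁻¹} := by
  rw [Subgroup.coe_map, Set.singleton_mul, Set.mul_singleton, Set.image_image]
  rfl

lemma conjmap_conjmap {Γ : Type*} [Group Γ] (a : Γ) (G : Subgroup Γ) :
    (G.map (MulAut.conj a).toMonoidHom).map (MulAut.conj a⁻¹).toMonoidHom = G := by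
  ext x
  constructor
  · rintro ⟨y, ⟨z, hz, rfl⟩, rfl⟩
    simpa [mul_assoc] using hz
  · intro hx
    exact ⟨a * x * a⁻¹, ⟨x, hx, rfl⟩, by simp [mul_assoc]⟩

lemma hconj_fwd {Γ : Type*} [Group Γ] (H : Subgroup Γ) (a : Γ) (G G' : Subgroup Γ)
    (h : HConjEquiv H G G') :
    HConjEquiv H (G.map (MulAut.conj a).toMonoidHom)
      (G'.map (MulAut.conj a).toMonoidHom) := by
  intro g
  rw [coe_conjmap, coe_conjmap, ← mul_assoc, ← mul_assoc, ← mul_assoc, ← mul_assoc,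
    mul_assoc (H : Set Γ) {g} {a}, Set.singleton_mul_singleton, h (g * a)]

lemma hconj_iff {Γ : Type*} [Group Γ] (H : Subgroup Γ) (a : Γ) (G G' : Subgroup Γ) :
    HConjEquiv H G G' ↔
      HConjEquiv H (G.map (MulAut.conj a).toMonoidHom)
        (G'.map (MulAut.conj a).toMonoidHom) := by
  constructor
  · exact hconj_fwd H a G G'
  · intro h
    have := hconj_fwd H a⁻¹ _ _ h
    rwa [conjmap_conjmap, conjmap_conjmap] at this

/-- `G` and `G'` are `𝓗`-equivalent iff their conjugates `a·G·a⁻¹` and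
`a·G'·a⁻¹` are `𝓗`-equivalent; consequently if `K` is the `𝓗`-closure of `G` then
`a·K·a⁻¹` is the `𝓗`-closure of `a·G·a⁻¹`. -/
theorem hConjEquiv_conj {Γ : Type*} [Group Γ] (H : Subgroup Γ) (a : Γ)
    (G G' : Subgroup Γ) :
    (HConjEquiv H G G' ↔
      HConjEquiv H (G.map (MulAut.conj a).toMonoidHom)
        (G'.map (MulAut.conj a).toMonoidHom)) ∧
    (∀ K : Subgroup Γ, IsHConjClosure H G K →
      IsHConjClosure H (G.map (MulAut.conj a).toMonoidHom)
        (K.map (MulAut.conj a).toMonoidHom)) := by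
  refine ⟨hconj_iff H a G G', ?_⟩
  rintro K ⟨hGK, hKG, hmax⟩
  refine ⟨Subgroup.map_le_map_iff_of_injective
      (MulEquiv.injective (MulAut.conj a)) |>.mpr hGK, hconj_fwd H a K G hKG, ?_⟩
  intro K' hK'le hK'eq
  have h1 : G ≤ K'.map (MulAut.conj a⁻¹).toMonoidHom := by
    have := Subgroup.map_le_map_iff_of_injective (f := (MulAut.conj a⁻¹).toMonoidHom)
      (MulEquiv.injective (MulAut.conj a⁻¹)) |>.mpr hK'le
    rwa [conjmap_conjmap] at this
  have h2 : HConjEquiv H (K'.map (MulAut.conj a⁻¹).toMonoidHom) G := by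
    have := hconj_fwd H a⁻¹ _ _ hK'eq
    rwa [conjmap_conjmap] at this
  have h3 := hmax _ h1 h2
  have h4 := Subgroup.map_le_map_iff_of_injective (f := (MulAut.conj a).toMonoidHom)
      (MulEquiv.injective (MulAut.conj a)) |>.mpr h3
  calc K' = (K'.map (MulAut.conj a⁻¹).toMonoidHom).map (MulAut.conj a).toMonoidHom := by
        have := conjmap_conjmap a⁻¹ K'
        simpa using this.symm
    _ ≤ K.map (MulAut.conj a).toMonoidHom := h4
end

section
/- Let Γ be a group and let H, G, G′ be subgroups of Γ with G ≤ G′. Let K be any subgroup of Γ with G ≤ K that is 𝓗-equivalent to G (i.e. H·g·K = H·g·G for all g ∈ Γ). Then the subgroup ⟨K, G′⟩ generated by K and G′ is 𝓗-equivalent to G′, i.e. H·g·⟨K, G′⟩ = H·g·G′ for all g ∈ Γ. In particular, the 𝓗-closure of G is contained in the 𝓗-closure of G′. -/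
open Pointwise

lemma mem_HgS {Γ : Type*} [Group Γ] (H : Subgroup Γ) (S : Set Γ) (g a : Γ) :
    a ∈ (H : Set Γ) * {g} * S ↔ ∃ h ∈ H, ∃ s ∈ S, a = h * g * s := by
  simp only [Set.mem_mul, Set.mem_singleton_iff, SetLike.mem_coe]
  constructor
  · rintro ⟨x, ⟨h, hh, y, rfl, rfl⟩, s, hs, rfl⟩
    exact ⟨h, hh, s, hs, rfl⟩
  · rintro ⟨h, hh, s, hs, rfl⟩
    exact ⟨h * g, ⟨h, hh, g, rfl, rfl⟩, s, hs, rfl⟩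

/-- If `G ≤ G'` and `K` is an overgroup of `G` that is `𝓗`-equivalent to
`G`, then `⟨K, G'⟩` is `𝓗`-equivalent to `G'`. In particular, the `𝓗`-closure of `G` is
contained in the `𝓗`-closure of `G'`. -/
theorem hConjClosure_mono {Γ : Type*} [Group Γ] (H G G' : Subgroup Γ) (hGG' : G ≤ G') :
    (∀ K : Subgroup Γ, G ≤ K → HConjEquiv H K G → HConjEquiv H (K ⊔ G') G') ∧
    (∀ K₁ K₂ : Subgroup Γ,
      IsHConjClosure H G K₁ → IsHConjClosure H G' K₂ → K₁ ≤ K₂) := by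
  have main : ∀ K : Subgroup Γ, G ≤ K → HConjEquiv H K G → HConjEquiv H (K ⊔ G') G' := by
    intro K hGK hKG
    -- key claim: every x in K ⊔ G' satisfies ∀ g₀, g₀ * x ∈ H g₀ G'
    have key : ∀ x ∈ K ⊔ G', ∀ g₀ : Γ, g₀ * x ∈ (H : Set Γ) * {g₀} * (G' : Set Γ) := by
      intro x hx
      rw [Subgroup.sup_eq_closure] at hx
      induction hx using Subgroup.closure_induction with
      | mem y hy =>
        intro g₀
        rcases hy with hy | hy
        · -- y ∈ K : use HgK = HgG ⊆ HgG'
          have : g₀ * y ∈ (H : Set Γ) * {g₀} * (K : Set Γ) :=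
            (mem_HgS H (K : Set Γ) g₀ _).2 ⟨1, H.one_mem, y, hy, by group⟩
          rw [hKG g₀] at this
          rcases (mem_HgS H (G : Set Γ) g₀ _).1 this with ⟨h, hh, s, hs, hEq⟩
          exact (mem_HgS H (G' : Set Γ) g₀ _).2 ⟨h, hh, s, hGG' hs, hEq⟩
        · exact (mem_HgS H (G' : Set Γ) g₀ _).2 ⟨1, H.one_mem, y, hy, by group⟩
      | one =>
        intro g₀
        exact (mem_HgS H (G' : Set Γ) g₀ _).2 ⟨1, H.one_mem, 1, G'.one_mem, by group⟩
      | mul a b ha hb iha ihb =>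
        intro g₀
        rcases (mem_HgS H (G' : Set Γ) g₀ _).1 (iha g₀) with ⟨h, hh, s, hs, hEq⟩
        rcases (mem_HgS H (G' : Set Γ) (g₀ * s) _).1 (ihb (g₀ * s)) with ⟨h₂, hh₂, s₂, hs₂, hEq₂⟩
        refine (mem_HgS H (G' : Set Γ) g₀ _).2 ⟨h * h₂, H.mul_mem hh hh₂, s * s₂, G'.mul_mem hs hs₂, ?_⟩
        -- g₀ * (a*b) = h * (g₀ * s * b) ... compute
        have : g₀ * a = h * g₀ * s := hEq
        calc g₀ * (a * b) = (g₀ * a) * b := by group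
          _ = h * ((g₀ * s) * b) := by rw [this]; group
          _ = h * (h₂ * (g₀ * s) * s₂) := by rw [hEq₂]
          _ = h * h₂ * g₀ * (s * s₂) := by group
      | inv a ha iha =>
        intro g₀
        rcases (mem_HgS H (G' : Set Γ) (g₀ * a⁻¹) _).1 (iha (g₀ * a⁻¹)) with ⟨h, hh, s, hs, hEq⟩
        -- g₀ = (g₀ * a⁻¹) * a = h * (g₀ * a⁻¹) * s  ⇒  g₀ * a⁻¹ = h⁻¹ * g₀ * s⁻¹
        refine (mem_HgS H (G' : Set Γ) g₀ _).2 ⟨h⁻¹, H.inv_mem hh, s⁻¹, G'.inv_mem hs, ?_⟩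
        have : g₀ * a⁻¹ * a = h * (g₀ * a⁻¹) * s := hEq
        have h1 : g₀ = h * (g₀ * a⁻¹) * s := by rw [← this]; group
        calc g₀ * a⁻¹ = h⁻¹ * (h * (g₀ * a⁻¹) * s) * s⁻¹ := by group
          _ = h⁻¹ * g₀ * s⁻¹ := by rw [← h1]
    intro g
    apply Set.Subset.antisymm
    · intro a ha
      rcases (mem_HgS H ((K ⊔ G' : Subgroup Γ) : Set Γ) g a).1 ha with ⟨h, hh, s, hs, rfl⟩
      rcases (mem_HgS H (G' : Set Γ) g _).1 (key s hs g) with ⟨h₂, hh₂, s₂, hs₂, hEq⟩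
      refine (mem_HgS H (G' : Set Γ) g _).2 ⟨h * h₂, H.mul_mem hh hh₂, s₂, hs₂, ?_⟩
      calc h * g * s = h * (g * s) := by group
        _ = h * (h₂ * g * s₂) := by rw [hEq]
        _ = h * h₂ * g * s₂ := by group
    · intro a ha
      rcases (mem_HgS H (G' : Set Γ) g a).1 ha with ⟨h, hh, s, hs, rfl⟩
      exact (mem_HgS H _ g _).2 ⟨h, hh, s, le_sup_right (a := K) hs, rfl⟩
  refine ⟨main, fun K₁ K₂ h₁ h₂ => ?_⟩
  have := h₂.2.2 (K₁ ⊔ G') le_sup_right (main K₁ h₁.1 h₁.2.1)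
  exact le_sup_left.trans this
end

section
/- Let Γ be a compact topological group and let H be an open subgroup of Γ. Then every 𝓗-closed subgroup of Γ is an open subgroup of Γ (indeed, it contains the normal core ⋂_{g ∈ Γ} g·H·g⁻¹ of H, which is an open normal subgroup of Γ), and there are only finitely many 𝓗-closed subgroups of Γ. In particular, for any subgroup G of Γ the 𝓗-closure of G is open. -/
open Pointwise

/-- `G` is `𝓗`-closed: the only overgroup of `G` that is `𝓗`-equivalent to `G` is `G`
itself. -/
def IsHConjClosed {Γ : Type*} [Group Γ] (H G : Subgroup Γ) : Prop :=
  ∀ G' : Subgroup Γ, G ≤ G' → HConjEquiv H G' G → G' = G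

theorem HConjEquiv.trans {Γ : Type*} [Group Γ] {H G₁ G₂ G₃ : Subgroup Γ}
    (h₁₂ : HConjEquiv H G₁ G₂) (h₂₃ : HConjEquiv H G₂ G₃) : HConjEquiv H G₁ G₃ :=
  fun g => (h₁₂ g).trans (h₂₃ g)

theorem hConjEquiv_sup_left {Γ : Type*} [Group Γ] {H N : Subgroup Γ} [N.Normal] (hNH : N ≤ H)
    (K : Subgroup Γ) : HConjEquiv H (N ⊔ K) K := by
  intro g
  rw [Subgroup.normal_mul]
  calc (H : Set Γ) * {g} * ((N : Set Γ) * K)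
      = H * ({g} * N) * K := by simp only [mul_assoc]
    _ = H * (N * {g}) * K := by rw [Subgroup.set_mul_normal_comm {g} N]
    _ = ((H : Set Γ) * N) * {g} * K := by simp only [mul_assoc]
    _ = H * {g} * K := by rw [← Subgroup.mul_normal H N, sup_eq_left.mpr hNH]

theorem IsHConjClosed.le_of_normal {Γ : Type*} [Group Γ] {H G N : Subgroup Γ} [N.Normal]
    (hG : IsHConjClosed H G) (hNH : N ≤ H) : N ≤ G :=
  sup_eq_right.mp (hG _ le_sup_right (hConjEquiv_sup_left hNH G))

theorem IsHConjClosure.le_of_normal {Γ : Type*} [Group Γ] {H G K N : Subgroup Γ} [N.Normal]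
    (hK : IsHConjClosure H G K) (hNH : N ≤ H) : N ≤ K := by
  obtain ⟨hGK, hKG, hmax⟩ := hK
  have hsup : N ⊔ K ≤ K :=
    hmax _ (hGK.trans le_sup_right) ((hConjEquiv_sup_left hNH K).trans hKG)
  exact le_sup_left.trans hsup

theorem Subgroup.finite_setOf_le_of_finiteIndex {G : Type*} [Group G] (N : Subgroup G)
    [N.FiniteIndex] : {K : Subgroup G | N ≤ K}.Finite := by
  have : Finite (Subgroup (G ⧸ N.normalCore)) :=
    Finite.of_injective (fun S => (S : Set (G ⧸ N.normalCore))) SetLike.coe_injective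
  let e := QuotientGroup.comapMk'OrderIso N.normalCore
  refine (Set.finite_range fun S => (e S : Subgroup G)).subset fun K hK => ?_
  exact ⟨e.symm ⟨K, N.normalCore_le.trans hK⟩, by simp⟩

theorem Subgroup.finiteIndex_of_isOpen {Γ : Type*} [Group Γ] [TopologicalSpace Γ]
    [SeparatelyContinuousMul Γ] [CompactSpace Γ] {H : Subgroup Γ} (hH : IsOpen (H : Set Γ)) :
    H.FiniteIndex :=
  have : Finite (Γ ⧸ H) := H.quotient_finite_of_isOpen hH
  H.finiteIndex_of_finite_quotient

theorem Subgroup.isOpen_normalCore {Γ : Type*} [Group Γ] [TopologicalSpace Γ]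
    [IsTopologicalGroup Γ] [CompactSpace Γ] {H : Subgroup Γ} (hH : IsOpen (H : Set Γ)) :
    IsOpen (H.normalCore : Set Γ) :=
  have := Subgroup.finiteIndex_of_isOpen hH
  H.normalCore.isOpen_of_isClosed_of_finiteIndex
    (H.normalCore_isClosed (H.isClosed_of_isOpen hH))

/-- Let `Γ` be a compact topological group and `H` an open subgroup.
Then the normal core `⋂ g, g·H·g⁻¹` of `H` is an open normal subgroup; every `𝓗`-closed
subgroup of `Γ` contains it and is open; there are only finitely many `𝓗`-closed
subgroups of `Γ`; and the `𝓗`-closure of any subgroup of `Γ` is open. -/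
theorem hConjClosed_open_and_finite {Γ : Type*} [Group Γ] [TopologicalSpace Γ]
    [IsTopologicalGroup Γ] [CompactSpace Γ] (H : Subgroup Γ) (hH : IsOpen (H : Set Γ)) :
    IsOpen ((H.normalCore : Subgroup Γ) : Set Γ) ∧
    (∀ G : Subgroup Γ, IsHConjClosed H G → H.normalCore ≤ G ∧ IsOpen (G : Set Γ)) ∧
    {G : Subgroup Γ | IsHConjClosed H G}.Finite ∧
    (∀ G K : Subgroup Γ, IsHConjClosure H G K → IsOpen (K : Set Γ)) := by
  have hcore_open := Subgroup.isOpen_normalCore hH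
  have hcore_le : ∀ G : Subgroup Γ, IsHConjClosed H G → H.normalCore ≤ G :=
    fun G hG => hG.le_of_normal H.normalCore_le
  have := Subgroup.finiteIndex_of_isOpen hcore_open
  refine ⟨hcore_open, fun G hG => ⟨hcore_le G hG, Subgroup.isOpen_mono (hcore_le G hG) hcore_open⟩,
    H.normalCore.finite_setOf_le_of_finiteIndex.subset hcore_le, fun G K hK => ?_⟩
  exact Subgroup.isOpen_mono (hK.le_of_normal H.normalCore_le) hcore_open
end

section
/- Let Γ be a group, let H be a subgroup of Γ, let M and N be normal subgroups of Γ such that H·M = H·N as subsets of Γ, and let G be a subgroup of Γ with N ≤ G. If G is 𝓗-closed, then G is 𝓚-closed, where K = H ⊔ M is the subgroup of Γ with underlying set H·M and 𝓚 denotes its conjugacy class; that is, any subgroup G′ of Γ with G ≤ G′ satisfying (H·M)·g·G′ = (H·M)·g·G for all g ∈ Γ equals G. (This is the group-theoretic content of the statement that an 𝓗-closed subgroup of level dividing the level of H(m) is 𝓗(m)-closed.) -/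
open Pointwise

private lemma normal_comm_singleton {Γ : Type*} [Group Γ] (N : Subgroup Γ) [N.Normal]
    (g : Γ) : (N : Set Γ) * {g} = {g} * (N : Set Γ) := by
  ext x
  simp only [Set.mem_mul, Set.mem_singleton_iff]
  constructor
  · rintro ⟨n, hn, y, hy, rfl⟩
    subst hy
    exact ⟨y, rfl, y⁻¹ * n * y, by simpa using Subgroup.Normal.conj_mem ‹N.Normal› n hn y⁻¹,
      by group⟩
  · rintro ⟨y, hy, n, hn, rfl⟩
    subst hy
    exact ⟨y * n * y⁻¹, Subgroup.Normal.conj_mem ‹N.Normal› n hn y, y, rfl, by group⟩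

private lemma absorb {Γ : Type*} [Group Γ] (N G : Subgroup Γ) (h : N ≤ G) :
    (N : Set Γ) * (G : Set Γ) = (G : Set Γ) := by
  ext x
  simp only [Set.mem_mul, SetLike.mem_coe]
  constructor
  · rintro ⟨n, hn, y, hy, rfl⟩
    exact G.mul_mem (h hn) hy
  · intro hx
    exact ⟨1, N.one_mem, x, hx, one_mul x⟩

private lemma key {Γ : Type*} [Group Γ] (H N G : Subgroup Γ) [N.Normal] (h : N ≤ G)
    (g : Γ) : ((H : Set Γ) * (N : Set Γ)) * {g} * (G : Set Γ)
      = (H : Set Γ) * {g} * (G : Set Γ) := by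
  rw [mul_assoc (H : Set Γ), normal_comm_singleton, ← mul_assoc, mul_assoc,
    absorb N G h]

/-- Let `M, N` be normal subgroups of `Γ` with `H·M = H·N` as subsets,
and let `G` be a subgroup with `N ≤ G`. If `G` is `𝓗`-closed then `G` is `𝓚`-closed,
where `K = H ⊔ M` is the subgroup with underlying set `H·M`: any overgroup `G'` of `G`
with `(H·M)·g·G' = (H·M)·g·G` for all `g ∈ Γ` equals `G`. -/
theorem hConjClosed_of_product {Γ : Type*} [Group Γ] (H M N : Subgroup Γ)
    [M.Normal] [N.Normal]
    (hMN : (H : Set Γ) * (M : Set Γ) = (H : Set Γ) * (N : Set Γ))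
    (G : Subgroup Γ) (hNG : N ≤ G)
    (hclosed : ∀ G' : Subgroup Γ, G ≤ G' →
      (∀ g : Γ, (H : Set Γ) * {g} * (G' : Set Γ) = (H : Set Γ) * {g} * (G : Set Γ)) →
      G' = G) :
    ∀ G' : Subgroup Γ, G ≤ G' →
      (∀ g : Γ, ((H : Set Γ) * (M : Set Γ)) * {g} * (G' : Set Γ)
          = ((H : Set Γ) * (M : Set Γ)) * {g} * (G : Set Γ)) →
      G' = G := by
  intro G' hGG' hprod
  refine hclosed G' hGG' fun g => ?_
  have h1 := hprod g
  rw [hMN, key H N G' (hNG.trans hGG') g, key H N G hNG g] at h1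
  exact h1
end

section
/- Let Γ be a group, let G be a subgroup of Γ, let H ≤ H′ be subgroups of Γ of finite index in Γ, and let g ∈ Γ. Then H and H′ are (g·G·g⁻¹)-equivalent, i.e. (g·G·g⁻¹)·H = (g·G·g⁻¹)·H′ as subsets of Γ, if and only if the number of right cosets of H contained in the double coset H·g·G equals [H′ : H] times the number of right cosets of H′ contained in the double coset H′·g·G. (Equivalently, the size of the orbit of the coset H·g under right multiplication by G equals [H′ : H] times the size of the orbit of the coset H′·g under right multiplication by G.) -/
open Pointwise

/-! With `K = g G g⁻¹` the double coset `H g G` is `H K g`, and its right cosets of `H`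
correspond to the cosets of `K ∩ H` in `K`; so the two counts are `[K : K ∩ H]` and
`[K : K ∩ H']`. By the tower law `[K : K ∩ H] = [K ∩ H' : K ∩ H] [K : K ∩ H']`, the formula is
equivalent to `[K ∩ H' : K ∩ H] = [H' : H]`, i.e. to `K ∩ H'` meeting every coset of `H` in
`H'`. That says `H' ⊆ K H`, which is `K H = K H'`. -/

namespace Subgroup

variable {Γ : Type*} [Group Γ]

abbrev RightCosetsIn (H : Subgroup Γ) (S : Set Γ) : Type _ :=
  {C : Set Γ // (∃ k : Γ, C = (H : Set Γ) * {k}) ∧ C ⊆ S}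

theorem coe_mul_singleton (H : Subgroup Γ) (a : Γ) :
    (H : Set Γ) * {a} = MulOpposite.op a • (H : Set Γ) := by
  rw [Set.mul_singleton]; rfl

theorem coe_mul_singleton_eq_iff {H : Subgroup Γ} {a b : Γ} :
    (H : Set Γ) * {a} = (H : Set Γ) * {b} ↔ b * a⁻¹ ∈ H := by
  rw [coe_mul_singleton, coe_mul_singleton, rightCoset_eq_iff]

theorem coe_mul_singleton_subset_coe_mul_iff {H : Subgroup Γ} {a : Γ} {T : Set Γ} :
    (H : Set Γ) * {a} ⊆ H * T ↔ a ∈ (H : Set Γ) * T := by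
  refine ⟨fun h ↦ h ?_, fun ha ↦ ?_⟩
  · rw [coe_mul_singleton]; exact mem_own_rightCoset H.toSubmonoid a
  · calc (H : Set Γ) * {a} ⊆ H * (H * T) :=
          Set.mul_subset_mul_left (Set.singleton_subset_iff.2 ha)
      _ = H * T := by rw [← mul_assoc, coe_mul_coe]

theorem card_rightCosetsIn_mul_mul_singleton (H K : Subgroup Γ) (g : Γ) :
    Nat.card (H.RightCosetsIn (H * K * {g})) = H.relIndex K := by
  let f : K → Set Γ := fun k ↦ (H : Set Γ) * {(k : Γ) * g}
  have hrange : ∀ C : Set Γ, C ∈ Set.range f ↔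
      (∃ k : Γ, C = (H : Set Γ) * {k}) ∧ C ⊆ H * K * {g} := by
    intro C
    rw [mul_assoc (H : Set Γ)]
    constructor
    · rintro ⟨k, rfl⟩
      refine ⟨⟨_, rfl⟩, coe_mul_singleton_subset_coe_mul_iff.2 ?_⟩
      exact Set.mem_mul.2 ⟨1, H.one_mem, k * g, Set.mul_mem_mul k.2 rfl, one_mul _⟩
    · rintro ⟨⟨a, rfl⟩, hsub⟩
      obtain ⟨h, hh, _, ⟨k, hk, _, rfl, rfl⟩, rfl⟩ :=
        coe_mul_singleton_subset_coe_mul_iff.1 hsub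
      exact ⟨⟨k, hk⟩, coe_mul_singleton_eq_iff.2 (by simpa [mul_assoc] using hh)⟩
  have hker : Setoid.ker f = QuotientGroup.rightRel (H.subgroupOf K) := by
    ext k k'
    rw [Setoid.ker_def, QuotientGroup.rightRel_apply, mem_subgroupOf]
    simp only [f, coe_mul_singleton_eq_iff, coe_mul, coe_inv, mul_inv_rev, mul_assoc,
      mul_inv_cancel_left]
  calc Nat.card (H.RightCosetsIn (H * K * {g}))
      = Nat.card (Set.range f) := Nat.card_congr (Equiv.subtypeEquivRight fun C ↦ (hrange C).symm)
    _ = Nat.card (Quotient (QuotientGroup.rightRel (H.subgroupOf K))) := by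
        rw [← hker]; exact Nat.card_congr (Setoid.quotientKerEquivRange f).symm
    _ = H.relIndex K :=
        Nat.card_congr (QuotientGroup.quotientRightRelEquivQuotientLeftRel _)

theorem coe_map_conj (G : Subgroup Γ) (g : Γ) :
    (G.map (MulAut.conj g).toMonoidHom : Set Γ) = {g} * G * {g⁻¹} := by
  rw [coe_map, Set.singleton_mul, Set.mul_singleton, Set.image_image]; rfl

theorem coe_mul_singleton_mul_coe (L G : Subgroup Γ) (g : Γ) :
    (L : Set Γ) * {g} * G = L * (G.map (MulAut.conj g).toMonoidHom) * {g} := by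
  simp only [coe_map_conj, mul_assoc, Set.singleton_mul_singleton, inv_mul_cancel,
    Set.singleton_one, mul_one]

theorem relIndex_inf_eq_iff_coe_subset_mul {A B : Subgroup Γ} (C : Subgroup Γ) (hAB : A ≤ B)
    (hA : A.relIndex B ≠ 0) :
    A.relIndex (B ⊓ C) = A.relIndex B ↔ (B : Set Γ) ⊆ C * A := by
  have : Finite (B ⧸ A.subgroupOf B) := Nat.finite_of_card_ne_zero hA
  let e := quotientSubgroupOfEmbeddingOfLE A (inf_le_left : B ⊓ C ≤ B)
  have hsurj : Function.Surjective e ↔ (B : Set Γ) ⊆ C * A := by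
    simp only [Function.Surjective, QuotientGroup.mk_surjective.forall,
      QuotientGroup.mk_surjective.exists, e, quotientSubgroupOfEmbeddingOfLE_apply_mk,
      QuotientGroup.eq, mem_subgroupOf]
    constructor
    · intro h x hx
      obtain ⟨y, hy⟩ := h ⟨x, hx⟩
      exact Set.mem_mul.2 ⟨y, (mem_inf.1 y.2).2, _, hy, mul_inv_cancel_left _ _⟩
    · rintro h ⟨x, hx⟩
      obtain ⟨c, hc, a, ha, rfl⟩ := h hx
      have hcB : c ∈ B := (B.mul_mem_cancel_right (hAB ha)).1 hx
      exact ⟨⟨c, mem_inf.2 ⟨hcB, hc⟩⟩, by simpa using ha⟩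
  calc A.relIndex (B ⊓ C) = A.relIndex B ↔ Function.Bijective e :=
        ((Nat.bijective_iff_injective_and_card e).trans (and_iff_right e.injective)).symm
    _ ↔ Function.Surjective e := and_iff_right e.injective
    _ ↔ (B : Set Γ) ⊆ C * A := hsurj

theorem coe_mul_eq_coe_mul_iff {H H' : Subgroup Γ} (K : Subgroup Γ) (hHH' : H ≤ H') :
    (K : Set Γ) * H = K * H' ↔ (H' : Set Γ) ⊆ K * H := by
  refine ⟨fun h ↦ h ▸ Set.subset_mul_right _ K.one_mem, fun h ↦ ?_⟩
  refine (Set.mul_subset_mul_left hHH').antisymm ?_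
  calc (K : Set Γ) * H' ⊆ K * (K * H) := Set.mul_subset_mul_left h
    _ = K * H := by rw [← mul_assoc, coe_mul_coe]

theorem coe_mul_eq_coe_mul_iff_relIndex_eq {H H' : Subgroup Γ} (K : Subgroup Γ) (hHH' : H ≤ H')
    (hH : H.relIndex H' ≠ 0) (hH' : H'.relIndex K ≠ 0) :
    (K : Set Γ) * H = K * H' ↔ H.relIndex K = H.relIndex H' * H'.relIndex K := by
  rw [coe_mul_eq_coe_mul_iff K hHH', ← relIndex_inf_eq_iff_coe_subset_mul K hHH' hH,
    ← Nat.mul_left_inj hH', relIndex_inf_mul_relIndex, inf_of_le_left hHH']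

end Subgroup

/-- Let `G` be a subgroup of `Γ`, `H ≤ H'` subgroups of finite index in
`Γ`, and `g ∈ Γ`. Then `H` and `H'` are `(g·G·g⁻¹)`-equivalent, i.e.
`(g·G·g⁻¹)·H = (g·G·g⁻¹)·H'`, if and only if the number of right cosets of `H` contained
in the double coset `H·g·G` equals `[H' : H]` times the number of right cosets of `H'`
contained in the double coset `H'·g·G`. -/
theorem equivalent_degree_formula {Γ : Type*} [Group Γ] (G H H' : Subgroup Γ)
    (hHH' : H ≤ H') [H.FiniteIndex] [H'.FiniteIndex] (g : Γ) :
    ({g} * (G : Set Γ) * {g⁻¹}) * (H : Set Γ)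
        = ({g} * (G : Set Γ) * {g⁻¹}) * (H' : Set Γ) ↔
      Nat.card {C : Set Γ // (∃ k : Γ, C = (H : Set Γ) * {k}) ∧
          C ⊆ (H : Set Γ) * {g} * (G : Set Γ)}
        = H.relIndex H' *
          Nat.card {C : Set Γ // (∃ k : Γ, C = (H' : Set Γ) * {k}) ∧
            C ⊆ (H' : Set Γ) * {g} * (G : Set Γ)} := by
  rw [← Subgroup.coe_map_conj, Subgroup.coe_mul_singleton_mul_coe H,
    Subgroup.coe_mul_singleton_mul_coe H', Subgroup.card_rightCosetsIn_mul_mul_singleton,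
    Subgroup.card_rightCosetsIn_mul_mul_singleton]
  exact Subgroup.coe_mul_eq_coe_mul_iff_relIndex_eq _ hHH' Subgroup.FiniteIndex.index_ne_zero
    Subgroup.FiniteIndex.index_ne_zero
end
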